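/- In the two-parameter quantum group U_q(g) of type G₂, one has [[[x₁,x₂],x₂], x₂⁻] = (1 + q)(1 − q⁻²)·[x₁,x₂]. -/

import Mathlib

/-!
Write `[a, c]_α = a c - α c a`. Expanding a nested bracket gives the twisted Leibniz rule
`[[a, b]_t, c]_{αβ} = β [a, c]_α b - t b [a, c]_α + [a, [b, c]_β]_{tα}`.
With `E = g₂ f₂` one has `[x₁, x₂⁻]_{p₂₁} = 0` and `[x₂, x₂⁻]_q = 1 - E`, and `E` skew-commutes
with `x₁` and `x₂`, hence with `y = [x₁, x₂]_{p₁₂}`, so every `E`-term cancels. Two applications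
of the rule give `[y, x₂⁻] = (1 - p₁₂p₂₁) x₁` and then `[[y, x₂], x₂⁻] = (1 + q)(1 - p₁₂p₂₁q) y`;
finally `p₁₂p₂₁ = q⁻³`.
-/

section SkewBracket

variable {k U : Type*} [CommRing k] [Ring U] [Algebra k U]

def skewBracket (α : k) (a c : U) : U := a * c - α • (c * a)

theorem skewBracket_skewBracket_left (t α β : k) (a b c : U) :
    skewBracket (α * β) (skewBracket t a b) c =
      β • (skewBracket α a c * b) - t • (b * skewBracket α a c) +
        skewBracket (t * α) a (skewBracket β b c) := by
  simp only [skewBracket, sub_mul, mul_sub, smul_sub, smul_mul_assoc, mul_smul_comm, smul_smul,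
    mul_assoc]
  module

theorem skewBracket_skewBracket_left_eq_zero (t : k) {α β : k} {a b c : U}
    (ha : skewBracket α a c = 0) (hb : skewBracket β b c = 0) :
    skewBracket (α * β) (skewBracket t a b) c = 0 := by
  rw [skewBracket_skewBracket_left, ha, hb]
  simp [skewBracket]

theorem skewBracket_mul_right_eq_zero {α β : k} {a c d : U} (hc : skewBracket α a c = 0)
    (hd : skewBracket β a d = 0) : skewBracket (α * β) a (c * d) = 0 := by
  rw [skewBracket, sub_eq_zero] at hc hd ⊢
  rw [← mul_assoc, hc, smul_mul_assoc, mul_assoc, hd, mul_smul_comm, smul_smul, mul_assoc]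

theorem skewBracket_one_sub_right (s : k) (a E : U) :
    skewBracket s a (1 - E) = (1 - s) • a - skewBracket s a E := by
  simp only [skewBracket, mul_sub, sub_mul, mul_one, one_mul, smul_sub]
  module

end SkewBracket

theorem stmt13_general (k U : Type) [Field k] [Ring U] [Algebra k U]
    (q p12 p21 : kˣ) (hq : (p12:k) * (p21:k) = (q:k)⁻¹ ^ 3)
    (x1 x2 x2m : U) (g2 f2 : Uˣ)
    (hx1g2 : x1 * g2 = (p12:k) • ((g2:U) * x1))
    (hx2g2 : x2 * g2 = (q:k) • ((g2:U) * x2))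
    (hx1f2 : x1 * f2 = (p21:k) • ((f2:U) * x1))
    (hx2f2 : x2 * f2 = (q:k) • ((f2:U) * x2))
    (h12 : x1 * x2m - (p21:k) • (x2m * x1) = 0)
    (h22 : x2 * x2m - (q:k) • (x2m * x2) = 1 - (g2:U) * f2) :
    ((x1 * x2 - (p12:k) • (x2 * x1)) * x2 - ((p12:k) * (q:k)) • (x2 * (x1 * x2 - (p12:k) • (x2 * x1)))) * x2m - ((p21:k) * (q:k)^2) • (x2m * ((x1 * x2 - (p12:k) • (x2 * x1)) * x2 - ((p12:k) * (q:k)) • (x2 * (x1 * x2 - (p12:k) • (x2 * x1))))) = ((1 + (q:k)) * (1 - (q:k)⁻¹^2)) • (x1 * x2 - (p12:k) • (x2 * x1)) := by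
  set E : U := (g2:U) * f2
  have hx1x2m : skewBracket (p21:k) x1 x2m = 0 := h12
  have hx2x2m : skewBracket (q:k) x2 x2m = 1 - E := h22
  have hx1E : skewBracket ((p12:k) * p21) x1 E = 0 :=
    skewBracket_mul_right_eq_zero (sub_eq_zero.2 hx1g2) (sub_eq_zero.2 hx1f2)
  have hx2E : skewBracket ((q:k) * q) x2 E = 0 :=
    skewBracket_mul_right_eq_zero (sub_eq_zero.2 hx2g2) (sub_eq_zero.2 hx2f2)
  have hyE : skewBracket ((p12:k) * q * (p21 * q)) (skewBracket (p12:k) x1 x2) E = 0 := by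
    rw [mul_mul_mul_comm]
    exact skewBracket_skewBracket_left_eq_zero _ hx1E hx2E
  have hyx2m : skewBracket ((p21:k) * q) (skewBracket (p12:k) x1 x2) x2m =
      (1 - (p12:k) * p21) • x1 := by
    rw [skewBracket_skewBracket_left, hx1x2m, hx2x2m, skewBracket_one_sub_right, hx1E]
    simp
  have hzx2m : skewBracket ((p21:k) * q * q) (skewBracket ((p12:k) * q)
      (skewBracket (p12:k) x1 x2) x2) x2m =
      ((1 + q) * (1 - (p12:k) * p21 * q)) • skewBracket (p12:k) x1 x2 := by
    rw [skewBracket_skewBracket_left, hyx2m, hx2x2m, skewBracket_one_sub_right, hyE]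
    simp only [skewBracket, smul_mul_assoc, mul_smul_comm, smul_sub, smul_smul, sub_zero]
    module
  calc _ = skewBracket ((p21:k) * q * q) (skewBracket ((p12:k) * q)
        (skewBracket (p12:k) x1 x2) x2) x2m := by rw [mul_assoc, ← sq]; rfl
    _ = _ := by
      rw [hzx2m, hq]
      congr 1
      field_simp

theorem stmt13 (k U : Type) [Field k] [Ring U] [Algebra k U]
    (q p12 p21 : kˣ) (hq : (p12:k) * (p21:k) = (q:k)⁻¹ ^ 3)
    (x1 x2 x1m x2m : U) (g1 g2 f1 f2 : Uˣ)
    (hg1g2 : (g1:U) * g2 = (g2:U) * g1)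
    (hg1f1 : (g1:U) * f1 = (f1:U) * g1)
    (hg1f2 : (g1:U) * f2 = (f2:U) * g1)
    (hg2f1 : (g2:U) * f1 = (f1:U) * g2)
    (hg2f2 : (g2:U) * f2 = (f2:U) * g2)
    (hf1f2 : (f1:U) * f2 = (f2:U) * f1)
    (hx1g1 : x1 * g1 = ((q:k)^3) • ((g1:U) * x1))
    (hx1g2 : x1 * g2 = (p12:k) • ((g2:U) * x1))
    (hx2g1 : x2 * g1 = (p21:k) • ((g1:U) * x2))
    (hx2g2 : x2 * g2 = (q:k) • ((g2:U) * x2))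
    (hx1f1 : x1 * f1 = ((q:k)^3) • ((f1:U) * x1))
    (hx1f2 : x1 * f2 = (p21:k) • ((f2:U) * x1))
    (hx2f1 : x2 * f1 = (p12:k) • ((f1:U) * x2))
    (hx2f2 : x2 * f2 = (q:k) • ((f2:U) * x2))
    (hx1mg1 : x1m * g1 = ((q:k)^3)⁻¹ • ((g1:U) * x1m))
    (hx1mg2 : x1m * g2 = (p12:k)⁻¹ • ((g2:U) * x1m))
    (hx2mg1 : x2m * g1 = (p21:k)⁻¹ • ((g1:U) * x2m))
    (hx2mg2 : x2m * g2 = (q:k)⁻¹ • ((g2:U) * x2m))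
    (hx1mf1 : x1m * f1 = ((q:k)^3)⁻¹ • ((f1:U) * x1m))
    (hx1mf2 : x1m * f2 = (p21:k)⁻¹ • ((f2:U) * x1m))
    (hx2mf1 : x2m * f1 = (p12:k)⁻¹ • ((f1:U) * x2m))
    (hx2mf2 : x2m * f2 = (q:k)⁻¹ • ((f2:U) * x2m))
    (h11 : x1 * x1m - ((q:k)^3) • (x1m * x1) = 1 - (g1:U) * f1)
    (h12 : x1 * x2m - (p21:k) • (x2m * x1) = 0)
    (h21 : x2 * x1m - (p12:k) • (x1m * x2) = 0)
    (h22 : x2 * x2m - (q:k) • (x2m * x2) = 1 - (g2:U) * f2) :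
    ((x1 * x2 - (p12:k) • (x2 * x1)) * x2 - ((p12:k) * (q:k)) • (x2 * (x1 * x2 - (p12:k) • (x2 * x1)))) * x2m - ((p21:k) * (q:k)^2) • (x2m * ((x1 * x2 - (p12:k) • (x2 * x1)) * x2 - ((p12:k) * (q:k)) • (x2 * (x1 * x2 - (p12:k) • (x2 * x1))))) = ((1 + (q:k)) * (1 - (q:k)⁻¹^2)) • (x1 * x2 - (p12:k) • (x2 * x1)) :=
  stmt13_general k U q p12 p21 hq x1 x2 x2m g2 f2 hx1g2 hx2g2 hx1f2 hx2f2 h12 h22
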